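/- Let K and B be positive integers with K ≥ (3+2√B)², let n_f be a nonnegative integer with 1 ≤ n_f + B ≤ ⌈K/2⌉, and let n_c be a positive integer with (8K+4√(BK)−4B)/9 ≤ n_c < K. Then 3√B/(√K+√B) ≤ √B/(√(K−n_c)+√B), and for every matrix Φ ∈ ℝ^{M×N} with 3⌈K/2⌉ ≤ N whose restricted isometry constant satisfies 3√B/(√K+√B) ≤ δ_{K+n_f+B} ≤ √B/(√(K−n_c)+√B), the condition δ_{K+B} < √B/(√K+√B) fails (indeed δ_{K+B} > √B/(√K+√B)). In other words, the recovery condition δ_{K+n_f+B} < √B/(√(K−n_c)+√B) is less restrictive than the condition δ_{K+B} < √B/(√K+√B). -/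

import Mathlib

open scoped BigOperators
open Matrix

/-- Euclidean norm of a finite-dimensional real vector. -/
noncomputable def enorm {ι : Type*} [Fintype ι] (v : ι → ℝ) : ℝ :=
  Real.sqrt (∑ i, v i ^ 2)

/-- `x` has at most `L` nonzero entries. -/
def SparseLe {N : ℕ} (L : ℕ) (x : Fin N → ℝ) : Prop :=
  (Finset.univ.filter fun i => x i ≠ 0).card ≤ L

/-- The restricted isometry constant of order `L`: the smallest `δ ≥ 0` such that
`(1-δ)‖x‖² ≤ ‖Φx‖² ≤ (1+δ)‖x‖²` for all `x` with at most `L` nonzero entries. -/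
noncomputable def RIC {M N : ℕ} (Φ : Matrix (Fin M) (Fin N) ℝ) (L : ℕ) : ℝ :=
  sInf {δ : ℝ | 0 ≤ δ ∧ ∀ x : Fin N → ℝ, SparseLe L x →
    (1 - δ) * ∑ i, x i ^ 2 ≤ ∑ i, (Φ.mulVec x) i ^ 2 ∧
      ∑ i, (Φ.mulVec x) i ^ 2 ≤ (1 + δ) * ∑ i, x i ^ 2}

/-- The column submatrix of `Φ` with columns indexed by the finite set `I`. -/
def colSub {M N : ℕ} (Φ : Matrix (Fin M) (Fin N) ℝ) (I : Finset (Fin N)) :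
    Matrix (Fin M) {j // j ∈ I} ℝ :=
  Matrix.of fun i j => Φ i j.val

/-! With `m = ⌈K/2⌉` we have `K + n_f + B ≤ 3m` and `2m ≤ K + B`. A `3m`-sparse vector splits into
three orthogonal `m`-sparse pieces, which yields `δ_{3m} ≤ 2 δ_{2m}`. Hence
`3√B/(√K+√B) ≤ δ_{K+n_f+B} ≤ 2 δ_{K+B}`, so `δ_{K+B} ≥ (3/2) √B/(√K+√B)`. The comparison of the two
thresholds is the rearrangement `3√(K - n_c) ≤ √K - 2√B` of the lower bound on `n_c`. -/

lemma Finset.exists_subset_card_le_and_card_sdiff_le {α : Type*} [DecidableEq α]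
    {s : Finset α} {a b : ℕ} (h : s.card ≤ a + b) : ∃ t ⊆ s, t.card ≤ a ∧ (s \ t).card ≤ b := by
  obtain ⟨t, hts, ht⟩ := Finset.exists_subset_card_eq (min_le_right a s.card)
  refine ⟨t, hts, ht ▸ min_le_left _ _, ?_⟩
  rw [Finset.card_sdiff_of_subset hts, ht]
  omega

lemma dotProduct_eq_zero_of_disjoint_support {n R : Type*} [Fintype n]
    [NonUnitalNonAssocSemiring R] {u v : n → R} (h : ∀ i, u i = 0 ∨ v i = 0) : u ⬝ᵥ v = 0 :=
  Finset.sum_eq_zero fun i _ => by rcases h i with h | h <;> simp [h]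

section Sparse

variable {N : ℕ}

lemma SparseLe.of_support_subset {L : ℕ} {x : Fin N → ℝ} (S : Finset (Fin N))
    (hS : ∀ i, x i ≠ 0 → i ∈ S) (hL : S.card ≤ L) : SparseLe L x :=
  (Finset.card_le_card fun i hi => hS i (Finset.mem_filter.mp hi).2).trans hL

lemma SparseLe.mono {L L' : ℕ} {x : Fin N → ℝ} (hx : SparseLe L x) (h : L ≤ L') :
    SparseLe L' x :=
  hx.trans h

lemma SparseLe.add {a b : ℕ} {u v : Fin N → ℝ} (hu : SparseLe a u) (hv : SparseLe b v) :
    SparseLe (a + b) (u + v) := by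
  refine .of_support_subset (Finset.univ.filter (u · ≠ 0) ∪ Finset.univ.filter (v · ≠ 0))
    (fun i hi => ?_) ((Finset.card_union_le _ _).trans (add_le_add hu hv))
  by_contra h
  simp_all

lemma SparseLe.neg {a : ℕ} {v : Fin N → ℝ} (hv : SparseLe a v) : SparseLe a (-v) := by
  simpa [SparseLe] using hv

lemma SparseLe.sub {a b : ℕ} {u v : Fin N → ℝ} (hu : SparseLe a u) (hv : SparseLe b v) :
    SparseLe (a + b) (u - v) := by
  simpa [sub_eq_add_neg] using hu.add hv.neg

lemma SparseLe.exists_indicator_split {a b : ℕ} {x : Fin N → ℝ} (hx : SparseLe (a + b) x) :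
    ∃ S : Set (Fin N), SparseLe a (S.indicator x) ∧ SparseLe b (Sᶜ.indicator x) := by
  obtain ⟨t, hts, hta, htb⟩ := Finset.exists_subset_card_le_and_card_sdiff_le hx
  refine ⟨t, .of_support_subset t (fun i hi => Set.mem_of_indicator_ne_zero hi) hta,
    .of_support_subset (Finset.univ.filter (x · ≠ 0) \ t) (fun i hi => ?_) htb⟩
  obtain ⟨hit, hxi⟩ := Set.indicator_apply_ne_zero.mp hi
  exact Finset.mem_sdiff.mpr ⟨by simpa using hxi, hit⟩

lemma SparseLe.exists_three_split {m : ℕ} {x : Fin N → ℝ} (hx : SparseLe (m + m + m) x) :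
    ∃ x₁ x₂ x₃ : Fin N → ℝ, x = x₁ + x₂ + x₃ ∧
      SparseLe m x₁ ∧ SparseLe m x₂ ∧ SparseLe m x₃ ∧
      x₁ ⬝ᵥ x₂ = 0 ∧ x₁ ⬝ᵥ x₃ = 0 ∧ x₂ ⬝ᵥ x₃ = 0 := by
  rw [add_assoc] at hx
  obtain ⟨S, hS, hSc⟩ := hx.exists_indicator_split
  obtain ⟨T, hT, hTc⟩ := hSc.exists_indicator_split
  refine ⟨S.indicator x, T.indicator (Sᶜ.indicator x), Tᶜ.indicator (Sᶜ.indicator x), ?_,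
    hS, hT, hTc, ?_, ?_, ?_⟩
  · rw [add_assoc, T.indicator_self_add_compl, S.indicator_self_add_compl]
  all_goals
    refine dotProduct_eq_zero_of_disjoint_support fun i => ?_
    by_cases hi : i ∈ S <;> by_cases hi' : i ∈ T <;> simp [hi, hi']

end Sparse

lemma dotProduct_self_nonneg {n R : Type*} [Fintype n] [Ring R] [LinearOrder R]
    [IsStrictOrderedRing R] (v : n → R) : 0 ≤ v ⬝ᵥ v :=
  Finset.sum_nonneg fun i _ => mul_self_nonneg (v i)

section RIP

variable {M N : ℕ} (Φ : Matrix (Fin M) (Fin N) ℝ)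

def isometryDefect (x : Fin N → ℝ) : ℝ :=
  Φ *ᵥ x ⬝ᵥ Φ *ᵥ x - x ⬝ᵥ x

def IsRIPBound (L : ℕ) (δ : ℝ) : Prop :=
  0 ≤ δ ∧ ∀ x : Fin N → ℝ, SparseLe L x → |isometryDefect Φ x| ≤ δ * (x ⬝ᵥ x)

lemma RIC_eq_sInf (L : ℕ) : RIC Φ L = sInf {δ | IsRIPBound Φ L δ} := by
  have sum_sq {n : ℕ} (v : Fin n → ℝ) : ∑ i, v i ^ 2 = v ⬝ᵥ v := by simp [dotProduct, sq]
  rw [RIC]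
  congr 1
  ext δ
  simp only [Set.mem_ofPred_eq, IsRIPBound, isometryDefect, sum_sq, abs_sub_le_iff]
  refine and_congr_right fun _ => forall₂_congr fun x _ => ?_
  constructor <;> rintro ⟨h₁, h₂⟩ <;> constructor <;> linarith

lemma isometryDefect_add (u v : Fin N → ℝ) :
    isometryDefect Φ (u + v) =
      isometryDefect Φ u + isometryDefect Φ v + 2 * (Φ *ᵥ u ⬝ᵥ Φ *ᵥ v - u ⬝ᵥ v) := by
  simp only [isometryDefect, mulVec_add, add_dotProduct, dotProduct_add, dotProduct_comm v u,
    dotProduct_comm (Φ *ᵥ v)]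
  ring

lemma isometryDefect_sub (u v : Fin N → ℝ) :
    isometryDefect Φ (u - v) =
      isometryDefect Φ u + isometryDefect Φ v - 2 * (Φ *ᵥ u ⬝ᵥ Φ *ᵥ v - u ⬝ᵥ v) := by
  simp only [isometryDefect, mulVec_sub, sub_dotProduct, dotProduct_sub, dotProduct_comm v u,
    dotProduct_comm (Φ *ᵥ v)]
  ring

lemma mulVec_dotProduct_self_le (x : Fin N → ℝ) :
    Φ *ᵥ x ⬝ᵥ Φ *ᵥ x ≤ (∑ i, ∑ j, Φ i j ^ 2) * (x ⬝ᵥ x) := by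
  rw [dotProduct, dotProduct, Finset.sum_mul]
  refine Finset.sum_le_sum fun i _ => ?_
  simpa [mulVec, dotProduct, ← sq] using Finset.sum_mul_sq_le_sq_mul_sq Finset.univ (Φ i) x

lemma exists_isRIPBound (L : ℕ) : ∃ δ, IsRIPBound Φ L δ := by
  refine ⟨1 + ∑ i, ∑ j, Φ i j ^ 2, by positivity, fun x _ => ?_⟩
  have := mulVec_dotProduct_self_le Φ x
  have : 0 ≤ Φ *ᵥ x ⬝ᵥ Φ *ᵥ x := dotProduct_self_nonneg _
  have : 0 ≤ x ⬝ᵥ x := dotProduct_self_nonneg _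
  rw [isometryDefect, abs_le]
  constructor <;> nlinarith

variable {Φ}

lemma RIC_le {L : ℕ} {δ : ℝ} (h : IsRIPBound Φ L δ) : RIC Φ L ≤ δ := by
  rw [RIC_eq_sInf]
  exact csInf_le ⟨0, fun _ hδ => hδ.1⟩ h

lemma isRIPBound_RIC (L : ℕ) : IsRIPBound Φ L (RIC Φ L) := by
  have hne : {δ | IsRIPBound Φ L δ}.Nonempty := exists_isRIPBound Φ L
  refine ⟨RIC_eq_sInf Φ L ▸ le_csInf hne fun _ hδ => hδ.1, fun x hx => ?_⟩
  rcases (dotProduct_self_nonneg x).eq_or_lt with hx0 | hx0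
  · simp [dotProduct_self_eq_zero.mp hx0.symm, isometryDefect]
  · rw [← div_le_iff₀ hx0, RIC_eq_sInf]
    exact le_csInf hne fun δ hδ => (div_le_iff₀ hx0).mpr (hδ.2 x hx)

lemma IsRIPBound.mono {L L' : ℕ} {δ : ℝ} (h : IsRIPBound Φ L δ) (hL : L' ≤ L) :
    IsRIPBound Φ L' δ :=
  ⟨h.1, fun x hx => h.2 x (hx.mono hL)⟩

lemma RIC_mono {L L' : ℕ} (hL : L' ≤ L) : RIC Φ L' ≤ RIC Φ L :=
  RIC_le ((isRIPBound_RIC L).mono hL)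

lemma IsRIPBound.abs_two_mul_dotProduct_le {L : ℕ} {δ : ℝ} (h : IsRIPBound Φ L δ)
    {u v : Fin N → ℝ} (hadd : SparseLe L (u + v)) (hsub : SparseLe L (u - v)) (huv : u ⬝ᵥ v = 0) :
    |2 * (Φ *ᵥ u ⬝ᵥ Φ *ᵥ v)| ≤ δ * (u ⬝ᵥ u + v ⬝ᵥ v) := by
  have norm_add : (u + v) ⬝ᵥ (u + v) = u ⬝ᵥ u + v ⬝ᵥ v := by
    simp only [add_dotProduct, dotProduct_add, dotProduct_comm v u, huv]; ring
  have norm_sub : (u - v) ⬝ᵥ (u - v) = u ⬝ᵥ u + v ⬝ᵥ v := by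
    simp only [sub_dotProduct, dotProduct_sub, dotProduct_comm v u, huv]; ring
  have hp := h.2 _ hadd
  have hm := h.2 _ hsub
  rw [isometryDefect_add, norm_add, huv] at hp
  rw [isometryDefect_sub, norm_sub, huv] at hm
  rw [abs_le] at hp hm ⊢
  constructor <;> linarith

/-- For the orthogonal `m`-sparse pieces `xᵢ` of `x`, averaging the RIP bounds for the three sums
`xᵢ + xⱼ` bounds the diagonal part of the defect by `δ ‖x‖²`, and the polarization bound on the
cross terms `⟪Φ xᵢ, Φ xⱼ⟫` contributes another `δ ‖x‖²`. -/
lemma IsRIPBound.three_mul {m : ℕ} {δ : ℝ} (h : IsRIPBound Φ (2 * m) δ) :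
    IsRIPBound Φ (3 * m) (2 * δ) := by
  refine ⟨by linarith [h.1], fun x hx => ?_⟩
  rw [show 3 * m = m + m + m by ring] at hx
  rw [two_mul] at h
  obtain ⟨x₁, x₂, x₃, rfl, h₁, h₂, h₃, h₁₂, h₁₃, h₂₃⟩ := hx.exists_three_split
  have pair {u v : Fin N → ℝ} (hu : SparseLe m u) (hv : SparseLe m v) (huv : u ⬝ᵥ v = 0) :
      |isometryDefect Φ (u + v)| ≤ δ * (u ⬝ᵥ u + v ⬝ᵥ v) ∧
        |2 * (Φ *ᵥ u ⬝ᵥ Φ *ᵥ v)| ≤ δ * (u ⬝ᵥ u + v ⬝ᵥ v) := by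
    refine ⟨?_, h.abs_two_mul_dotProduct_le (hu.add hv) (hu.sub hv) huv⟩
    convert h.2 _ (hu.add hv) using 2
    simp only [add_dotProduct, dotProduct_add, dotProduct_comm v u, huv]
    ring
  obtain ⟨d₁₂, c₁₂⟩ := pair h₁ h₂ h₁₂
  obtain ⟨d₁₃, c₁₃⟩ := pair h₁ h₃ h₁₃
  obtain ⟨d₂₃, c₂₃⟩ := pair h₂ h₃ h₂₃
  rw [isometryDefect_add] at d₁₂ d₁₃ d₂₃ ⊢
  rw [isometryDefect_add]
  simp only [add_dotProduct, dotProduct_add, mulVec_add, h₁₂, h₁₃, h₂₃, dotProduct_comm x₂ x₁,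
    dotProduct_comm x₃ x₁, dotProduct_comm x₃ x₂] at d₁₂ d₁₃ d₂₃ ⊢
  rw [abs_le] at d₁₂ d₁₃ d₂₃ c₁₂ c₁₃ c₂₃ ⊢
  constructor <;> linarith

lemma RIC_three_mul_le (m : ℕ) : RIC Φ (3 * m) ≤ 2 * RIC Φ (2 * m) :=
  RIC_le (isRIPBound_RIC _).three_mul

end RIP

lemma three_mul_sqrt_sub_le {K B c : ℝ} (hKB : (3 + 2 * √B) ^ 2 ≤ K)
    (hc : (8 * K + 4 * √(B * K) - 4 * B) / 9 ≤ c) (hB : 0 ≤ B) :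
    3 * √(K - c) ≤ √K - 2 * √B := by
  have hk : 3 + 2 * √B ≤ √K := Real.le_sqrt_of_sq_le hKB
  have hsq : 9 * (K - c) ≤ (√K - 2 * √B) ^ 2 := by
    have hK : 0 ≤ K := le_trans (sq_nonneg _) hKB
    rw [Real.sqrt_mul hB] at hc
    nlinarith [Real.sq_sqrt hK, Real.sq_sqrt hB]
  calc 3 * √(K - c) = √(9 * (K - c)) := by
        rw [Real.sqrt_mul (by norm_num), show (9 : ℝ) = 3 ^ 2 by norm_num,
          Real.sqrt_sq three_pos.le]
    _ ≤ √((√K - 2 * √B) ^ 2) := Real.sqrt_le_sqrt hsq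
    _ = √K - 2 * √B := Real.sqrt_sq (by linarith [Real.sqrt_nonneg B])

lemma three_mul_div_le_div_sqrt_sub {K B c : ℝ} (hKB : (3 + 2 * √B) ^ 2 ≤ K)
    (hc : (8 * K + 4 * √(B * K) - 4 * B) / 9 ≤ c) (hB : 0 < B) :
    3 * √B / (√K + √B) ≤ √B / (√(K - c) + √B) := by
  have hb : 0 < √B := Real.sqrt_pos.mpr hB
  have := three_mul_sqrt_sub_le hKB hc hB.le
  rw [div_le_div_iff₀ (by positivity) (by positivity)]
  nlinarith

theorem stmt_9_general (K B : ℕ) (hB : 0 < B)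
    (hKB : ((3 : ℝ) + 2 * Real.sqrt B) ^ 2 ≤ K)
    (n_f : ℕ) (h2 : n_f + B ≤ (K + 1) / 2)
    (n_c : ℕ)
    (hnclb : (8 * K + 4 * Real.sqrt ((B : ℝ) * K) - 4 * B) / 9 ≤ n_c) :
    3 * Real.sqrt B / (Real.sqrt K + Real.sqrt B)
        ≤ Real.sqrt B / (Real.sqrt ((K : ℝ) - n_c) + Real.sqrt B) ∧
      ∀ (M N : ℕ) (Φ : Matrix (Fin M) (Fin N) ℝ), 3 * ((K + 1) / 2) ≤ N →
        3 * Real.sqrt B / (Real.sqrt K + Real.sqrt B) ≤ RIC Φ (K + n_f + B) →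
        RIC Φ (K + n_f + B) ≤ Real.sqrt B / (Real.sqrt ((K : ℝ) - n_c) + Real.sqrt B) →
        RIC Φ (K + B) > Real.sqrt B / (Real.sqrt K + Real.sqrt B) := by
  have hB' : (0 : ℝ) < B := Nat.cast_pos.mpr hB
  refine ⟨three_mul_div_le_div_sqrt_sub hKB hnclb hB', fun M N Φ _ hlow _ => ?_⟩
  set m := (K + 1) / 2
  have hT : 0 < √(B : ℝ) / (√K + √B) := by positivity
  have h3m : RIC Φ (K + n_f + B) ≤ RIC Φ (3 * m) := RIC_mono (by omega)
  have h2m : RIC Φ (2 * m) ≤ RIC Φ (K + B) := RIC_mono (by omega)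
  have h32 : RIC Φ (3 * m) ≤ 2 * RIC Φ (2 * m) := RIC_three_mul_le m
  rw [mul_div_assoc] at hlow
  linarith

theorem stmt_9 (K B : ℕ) (hK : 0 < K) (hB : 0 < B)
    (hKB : ((3 : ℝ) + 2 * Real.sqrt B) ^ 2 ≤ K)
    (n_f : ℕ) (h1 : 1 ≤ n_f + B) (h2 : n_f + B ≤ (K + 1) / 2)
    (n_c : ℕ) (hnc0 : 0 < n_c) (hncK : n_c < K)
    (hnclb : (8 * K + 4 * Real.sqrt ((B : ℝ) * K) - 4 * B) / 9 ≤ n_c) :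
    3 * Real.sqrt B / (Real.sqrt K + Real.sqrt B)
        ≤ Real.sqrt B / (Real.sqrt ((K : ℝ) - n_c) + Real.sqrt B) ∧
      ∀ (M N : ℕ) (Φ : Matrix (Fin M) (Fin N) ℝ), 3 * ((K + 1) / 2) ≤ N →
        3 * Real.sqrt B / (Real.sqrt K + Real.sqrt B) ≤ RIC Φ (K + n_f + B) →
        RIC Φ (K + n_f + B) ≤ Real.sqrt B / (Real.sqrt ((K : ℝ) - n_c) + Real.sqrt B) →
        RIC Φ (K + B) > Real.sqrt B / (Real.sqrt K + Real.sqrt B) :=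
  stmt_9_general K B hB hKB n_f h2 n_c hnclb
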